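/- arXiv:1801.07837 — 7 statements merged into one kernel-verified Lean document; each statement's English description precedes it below -/
import Mathlib

section
/- For all t in [-1,1], arccos|t| ≤ π/2 - (69/50)·t². -/
/-!
With `c = 69/50` and `u = |t|`, since `arccos u = π/2 - arcsin u` it suffices that
`sin (c u²) ≤ u` on `[0, 1]`. Squaring and using `cos 2y = 1 - 2 sin² y`, this is
`1 - z / c ≤ cos z` for `z ∈ [0, 2c]`. The line nearly touches `cos` at `z ≈ 2.331` (the gap is
about `6·10⁻⁵`), so we compare it with the degree-14 Taylor polynomial of `cos`, a lower bound
on `[0, ∞)` because the Taylor remainders of `sin` and `cos` alternate in sign, and certify the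
resulting polynomial inequality explicitly.
-/

open Real Finset Nat

noncomputable def sinTaylor (n : ℕ) (x : ℝ) : ℝ :=
  ∑ k ∈ range n, (-1) ^ k * x ^ (2 * k + 1) / (2 * k + 1)!

noncomputable def cosTaylor (n : ℕ) (x : ℝ) : ℝ :=
  ∑ k ∈ range n, (-1) ^ k * x ^ (2 * k) / (2 * k)!

lemma hasDerivAt_sinTaylor (n : ℕ) (x : ℝ) : HasDerivAt (sinTaylor n) (cosTaylor n x) x := by
  refine HasDerivAt.fun_sum fun k _ => ?_
  refine (((hasDerivAt_pow (2 * k + 1) x).const_mul ((-1 : ℝ) ^ k)).div_const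
    ((2 * k + 1)! : ℝ)).congr_deriv ?_
  rw [Nat.factorial_succ]
  push_cast
  field_simp

lemma hasDerivAt_cosTaylor_succ (n : ℕ) (x : ℝ) :
    HasDerivAt (cosTaylor (n + 1)) (-sinTaylor n x) x := by
  have hcos : cosTaylor (n + 1) = fun y =>
      ∑ k ∈ range n, (-1 : ℝ) ^ (k + 1) * y ^ (2 * (k + 1)) / (2 * (k + 1))! + 1 := by
    ext y
    simp [cosTaylor, sum_range_succ']
  rw [hcos, sinTaylor, ← sum_neg_distrib]
  refine (HasDerivAt.fun_sum fun k _ => ?_).add_const 1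
  refine (((hasDerivAt_pow (2 * (k + 1)) x).const_mul ((-1 : ℝ) ^ (k + 1))).div_const
    ((2 * (k + 1))! : ℝ)).congr_deriv ?_
  rw [show 2 * (k + 1) = 2 * k + 1 + 1 by ring, Nat.factorial_succ]
  push_cast
  field_simp
  ring

lemma nonneg_of_hasDerivAt_nonneg {f f' : ℝ → ℝ} (hf : ∀ x, HasDerivAt f (f' x) x)
    (h₀ : 0 ≤ f 0) (hf' : ∀ x, 0 ≤ x → 0 ≤ f' x) {x : ℝ} (hx : 0 ≤ x) : 0 ≤ f x := by
  have hmono : MonotoneOn f (Set.Ici 0) :=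
    monotoneOn_of_hasDerivWithinAt_nonneg (convex_Ici 0)
      (fun y _ => (hf y).continuousAt.continuousWithinAt)
      (fun y _ => (hf y).hasDerivWithinAt)
      (fun y hy => hf' y (le_of_lt (by simpa using hy)))
  exact h₀.trans (hmono Set.self_mem_Ici hx hx)

lemma sinTaylor_remainder_nonneg_of_cos {n : ℕ}
    (h : ∀ x, 0 ≤ x → 0 ≤ (-1) ^ n * (cosTaylor (n + 1) x - cos x)) {x : ℝ} (hx : 0 ≤ x) :
    0 ≤ (-1) ^ n * (sinTaylor (n + 1) x - sin x) :=
  nonneg_of_hasDerivAt_nonneg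
    (fun y => ((hasDerivAt_sinTaylor (n + 1) y).sub (hasDerivAt_sin y)).const_mul _)
    (by simp [sinTaylor]) h hx

theorem cosTaylor_remainder_nonneg (n : ℕ) {x : ℝ} (hx : 0 ≤ x) :
    0 ≤ (-1) ^ n * (cosTaylor (n + 1) x - cos x) := by
  induction n generalizing x with
  | zero => simpa [cosTaylor] using cos_le_one x
  | succ n ih =>
    refine nonneg_of_hasDerivAt_nonneg
      (fun y => ((hasDerivAt_cosTaylor_succ (n + 1) y).sub (hasDerivAt_cos y)).const_mul _)
      (by simp [cosTaylor, sum_range_succ']) (fun y hy => ?_) hx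
    exact (sinTaylor_remainder_nonneg_of_cos (fun _ => ih) hy).trans_eq (by ring)

theorem cosTaylor_le_cos (m : ℕ) {x : ℝ} (hx : 0 ≤ x) : cosTaylor (2 * m + 2) x ≤ cos x := by
  have h := cosTaylor_remainder_nonneg (2 * m + 1) hx
  rw [pow_succ, pow_mul] at h
  norm_num at h
  linarith

lemma cosTaylor_eight (x : ℝ) : cosTaylor 8 x = 1 - x ^ 2 / 2 + x ^ 4 / 24 - x ^ 6 / 720
    + x ^ 8 / 40320 - x ^ 10 / 3628800 + x ^ 12 / 479001600 - x ^ 14 / 87178291200 := by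
  simp [cosTaylor, sum_range_succ, Nat.factorial]
  ring

lemma one_sub_mul_le_cosTaylor_eight {z : ℝ} (h₀ : 0 ≤ z) (h₁ : z ≤ 69 / 25) :
    1 - 50 / 69 * z ≤ cosTaylor 8 z := by
  have hB : ∀ i j : ℕ, 0 ≤ (z - 1049 / 450) ^ 2 * z ^ i * (69 / 25 - z) ^ j := fun i j => by
    have : 0 ≤ 69 / 25 - z := by linarith
    positivity
  -- `1049/450` approximates the near-tangency point: modulo `(z - 1049/450)²` the polynomial
  -- leaves a linear remainder positive on `[0, 69/25]`, and the quotient has positive Bernstein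
  -- coefficients there.
  have hq : 0 ≤ 50 / 69 - z / 2 + z ^ 3 / 24 - z ^ 5 / 720 + z ^ 7 / 40320 - z ^ 9 / 3628800
      + z ^ 11 / 479001600 - z ^ 13 / 87178291200 := by
    linarith [hB 0 11, hB 1 10, hB 2 9, hB 3 8, hB 4 7, hB 5 6, hB 6 5, hB 7 4, hB 8 3, hB 9 2,
      hB 10 1, hB 11 0]
  rw [cosTaylor_eight]
  linarith [mul_nonneg h₀ hq]

lemma one_sub_mul_le_cos {z : ℝ} (h₀ : 0 ≤ z) (h₁ : z ≤ 69 / 25) : 1 - 50 / 69 * z ≤ cos z :=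
  (one_sub_mul_le_cosTaylor_eight h₀ h₁).trans (cosTaylor_le_cos 3 h₀)

lemma mul_sq_le_arcsin {u : ℝ} (h₀ : 0 ≤ u) (h₁ : u ≤ 1) : 69 / 50 * u ^ 2 ≤ arcsin u := by
  have hy₀ : 0 ≤ 69 / 50 * u ^ 2 := by positivity
  have hy₁ : 69 / 50 * u ^ 2 ≤ 69 / 50 := by nlinarith
  rw [le_arcsin_iff_sin_le ⟨by linarith [pi_gt_three], by linarith [pi_gt_three]⟩
    ⟨by linarith, h₁⟩]
  have hcos := one_sub_mul_le_cos (z := 2 * (69 / 50 * u ^ 2)) (by positivity) (by linarith)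
  rw [cos_two_mul, cos_sq'] at hcos
  exact (le_abs_self _).trans (abs_le_of_sq_le_sq (by linarith) h₀)

theorem stmt_0 : ∀ t ∈ Set.Icc (-1 : ℝ) 1,
    Real.arccos |t| ≤ Real.pi / 2 - (69 / 50) * t ^ 2 := by
  intro t ⟨ht₁, ht₂⟩
  have h := mul_sq_le_arcsin (abs_nonneg t) (abs_le.2 ⟨ht₁, ht₂⟩)
  rw [arccos_eq_pi_div_two_sub_arcsin, ← sq_abs t]
  linarith
end

section
/- For any N points z_1,…,z_N on the unit sphere S^d ⊂ ℝ^{d+1}, the discrete frame potential satisfies (1/N²)·∑_{i,j=1}^N (z_i·z_j)² ≥ 1/(d+1). -/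
open RealInnerProductSpace

/-!
Let `A` be the `N × (d+1)` matrix whose rows are the `z i`. The sum of the squared inner
products is the squared Frobenius norm of the Gram matrix `A Aᵀ`, which by cyclicity of the
trace equals that of the frame matrix `S = Aᵀ A`, while `trace S = ∑ ‖z i‖² = N`. Keeping only
the diagonal of `S` and applying Cauchy–Schwarz to it gives `N² ≤ (d + 1) ∑ S_ab²`.
-/

open Matrix

namespace Matrix

variable {m n : Type*} [Fintype m] [Fintype n]

lemma trace_mul_transpose_self (B : Matrix m n ℝ) :
    trace (B * Bᵀ) = ∑ i, ∑ j, B i j ^ 2 := by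
  simp only [trace, diag, mul_apply, transpose_apply, sq]

lemma sq_trace_le_card_mul_sum_sq (B : Matrix n n ℝ) :
    trace B ^ 2 ≤ Fintype.card n * ∑ i, ∑ j, B i j ^ 2 := by
  have diag_le : ∑ i, B i i ^ 2 ≤ ∑ i, ∑ j, B i j ^ 2 :=
    Finset.sum_le_sum fun i _ =>
      Finset.single_le_sum (f := fun j => B i j ^ 2) (fun _ _ => sq_nonneg _) (Finset.mem_univ i)
  calc trace B ^ 2 ≤ Fintype.card n * ∑ i, B i i ^ 2 := sq_sum_le_card_mul_sum_sq
    _ ≤ Fintype.card n * ∑ i, ∑ j, B i j ^ 2 := by gcongr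

end Matrix

section FramePotential

variable {ι n : Type*} [Fintype n]

lemma gram_eq_mul_transpose (v : ι → EuclideanSpace ℝ n) :
    gram ℝ v = of (fun i a => v i a) * (of fun i a => v i a)ᵀ := by
  ext i j
  simp only [gram_apply, EuclideanSpace.inner_eq_star_dotProduct, dotProduct, mul_apply,
    transpose_apply, of_apply, star_trivial, mul_comm]

theorem sq_sum_norm_sq_le_card_mul_sum_sq_inner [Fintype ι] (v : ι → EuclideanSpace ℝ n) :
    (∑ i, ‖v i‖ ^ 2) ^ 2 ≤ Fintype.card n * ∑ i, ∑ j, ⟪v i, v j⟫ ^ 2 := by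
  set A : Matrix ι n ℝ := of fun i a => v i a
  have hG : gram ℝ v = A * Aᵀ := gram_eq_mul_transpose v
  have frobenius_eq : ∑ i, ∑ j, ⟪v i, v j⟫ ^ 2 = ∑ a, ∑ b, (Aᵀ * A) a b ^ 2 := by
    calc ∑ i, ∑ j, ⟪v i, v j⟫ ^ 2 = trace (gram ℝ v * (gram ℝ v)ᵀ) := by
          simp only [trace_mul_transpose_self, gram_apply]
      _ = trace (Aᵀ * A * (Aᵀ * A)ᵀ) := by
          rw [hG, transpose_mul, transpose_transpose, transpose_mul, transpose_transpose,
            ← Matrix.mul_assoc, trace_mul_cycle]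
          simp only [Matrix.mul_assoc]
      _ = ∑ a, ∑ b, (Aᵀ * A) a b ^ 2 := trace_mul_transpose_self _
  have trace_eq : trace (Aᵀ * A) = ∑ i, ‖v i‖ ^ 2 := by
    rw [trace_mul_comm, ← hG]
    simp only [trace, diag, gram_apply, real_inner_self_eq_norm_sq]
  rw [frobenius_eq, ← trace_eq]
  exact sq_trace_le_card_mul_sum_sq _

end FramePotential

theorem stmt_1 (d N : ℕ) (hN : 0 < N) (z : Fin N → EuclideanSpace ℝ (Fin (d + 1)))
    (hz : ∀ i, ‖z i‖ = 1) :
    (1 / (N : ℝ) ^ 2) * ∑ i, ∑ j, ⟪z i, z j⟫ ^ 2 ≥ 1 / (d + 1) := by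
  have h := sq_sum_norm_sq_le_card_mul_sum_sq_inner z
  simp only [hz, one_pow, Finset.sum_const, Finset.card_univ, Fintype.card_fin, nsmul_eq_mul,
    mul_one, Nat.cast_add, Nat.cast_one] at h
  have hd : (0 : ℝ) < d + 1 := by positivity
  have hN2 : (0 : ℝ) < (N : ℝ) ^ 2 := by positivity
  rw [ge_iff_le, one_div_mul_eq_div, div_le_div_iff₀ hd hN2, one_mul]
  linarith
end

section
/- For any N points z_1,…,z_N on S^d with d ≥ 2, the discrete energy (1/N²)·∑_{i,j=1}^N arccos|z_i·z_j| is at most π/2 − 69/(50(d+1)). -/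
/-!
Pointwise, `arccos |t| ≤ π / 2 - (69 / 50) t²` for `|t| ≤ 1`: with `t = sin β` this is
`1 - cos φ ≤ (50 / 69) φ` on `[0, π]` for `φ = 2β`, which follows from Taylor bounds for `cos`
and `sin`. Summing, it remains to bound the frame potential `∑ᵢⱼ ⟪zᵢ, zⱼ⟫²` from below by
`N² / (d + 1)`: it is the squared Hilbert–Schmidt norm of the frame operator `∑ᵢ zᵢ zᵢᵀ`, whose
trace is `N`, and Cauchy–Schwarz on the diagonal gives `N² ≤ (d + 1) ∑ᵢⱼ ⟪zᵢ, zⱼ⟫²`.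
-/

open Real RealInnerProductSpace Module

lemma apply_le_apply_of_hasDerivAt_nonneg {f f' : ℝ → ℝ} {a x : ℝ}
    (hf : ∀ t, HasDerivAt f (f' t) t) (hf' : ∀ t, a ≤ t → 0 ≤ f' t) (hx : a ≤ x) :
    f a ≤ f x := by
  refine monotoneOn_of_hasDerivWithinAt_nonneg (convex_Ici a)
    (fun t _ => (hf t).continuousAt.continuousWithinAt)
    (fun t _ => (hf t).hasDerivWithinAt) (fun t ht => hf' t ?_) Set.self_mem_Ici hx hx
  rw [interior_Ici] at ht
  exact ht.le

namespace Real

lemma cos_le_one_sub_sq_div_two_add_pow_four {x : ℝ} (hx : 0 ≤ x) :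
    cos x ≤ 1 - x ^ 2 / 2 + x ^ 4 / 24 := by
  have hderiv (t : ℝ) : HasDerivAt (fun t => 1 - t ^ 2 / 2 + t ^ 4 / 24 - cos t)
      (sin t - (t - t ^ 3 / 6)) t := by
    refine ((((hasDerivAt_pow 2 t).div_const 2).const_sub 1).add
      ((hasDerivAt_pow 4 t).div_const 24)).sub (hasDerivAt_cos t) |>.congr_deriv ?_
    norm_num
    ring
  have := apply_le_apply_of_hasDerivAt_nonneg hderiv (fun t ht => sub_nonneg.2 (sin_ge_sub_cube ht)) hx
  simp only [cos_zero] at this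
  linarith

lemma sin_le_sub_cube_add_pow_five {x : ℝ} (hx : 0 ≤ x) :
    sin x ≤ x - x ^ 3 / 6 + x ^ 5 / 120 := by
  have hderiv (t : ℝ) : HasDerivAt (fun t => t - t ^ 3 / 6 + t ^ 5 / 120 - sin t)
      (1 - t ^ 2 / 2 + t ^ 4 / 24 - cos t) t := by
    refine (((hasDerivAt_id' t).sub ((hasDerivAt_pow 3 t).div_const 6)).add
      ((hasDerivAt_pow 5 t).div_const 120)).sub (hasDerivAt_sin t) |>.congr_deriv ?_
    norm_num
    ring
  have := apply_le_apply_of_hasDerivAt_nonneg hderiv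
    (fun t ht => sub_nonneg.2 (cos_le_one_sub_sq_div_two_add_pow_four ht)) hx
  simp only [sin_zero] at this
  linarith

lemma one_sub_cos_le_mul {φ : ℝ} (h0 : 0 ≤ φ) (hπ : φ ≤ π) : 1 - cos φ ≤ 50 / 69 * φ := by
  rcases le_or_gt φ (100 / 69) with hsmall | hsmall
  · nlinarith [one_sub_sq_div_two_le_cos (x := φ)]
  rcases le_or_gt φ (π / 2) with hacute | hobtuse
  · nlinarith [cos_nonneg_of_mem_Icc ⟨by linarith, hacute⟩]
  obtain ⟨ξ, rfl⟩ : ∃ ξ, φ = ξ + π / 2 := ⟨φ - π / 2, by ring⟩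
  have hξ0 : 0 ≤ ξ := by linarith
  have hξ1 : ξ ≤ 1.6 := by linarith [pi_lt_d2]
  -- The margin is only about 6⋅10⁻⁵ (near `ξ = arccos (50 / 69)`), hence the quintic Taylor
  -- bound for `sin` and `π > 3.141592`.
  have hpoly : 19 / 69 * ξ - ξ ^ 3 / 6 + ξ ^ 5 / 120 ≤ 47699 / 345000 := by
    nlinarith [mul_nonneg hξ0 (sq_nonneg (ξ - 0.7607)),
      mul_nonneg (sub_nonneg.2 hξ1) (sq_nonneg (ξ - 0.7607)),
      mul_nonneg (sub_nonneg.2 hξ1) (sq_nonneg (ξ ^ 2 - 0.5787))]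
  rw [cos_add_pi_div_two]
  linarith [sin_le_sub_cube_add_pow_five hξ0, pi_gt_d6]

lemma mul_sin_sq_le {β : ℝ} (h0 : 0 ≤ β) (hπ : β ≤ π / 2) : 69 / 50 * sin β ^ 2 ≤ β := by
  have := one_sub_cos_le_mul (φ := 2 * β) (by linarith) (by linarith)
  rw [sin_sq_eq_half_sub]
  linarith

lemma arccos_abs_le {t : ℝ} (ht : |t| ≤ 1) : arccos |t| ≤ π / 2 - 69 / 50 * t ^ 2 := by
  have := mul_sin_sq_le (arcsin_nonneg.2 (abs_nonneg t)) (arcsin_le_pi_div_two _)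
  rw [sin_arcsin (by linarith [abs_nonneg t]) ht, sq_abs] at this
  rw [arccos_eq_pi_div_two_sub_arcsin]
  linarith

end Real

section FramePotential

variable {E ι : Type*} [NormedAddCommGroup E] [InnerProductSpace ℝ E] [FiniteDimensional ℝ E]
  [Fintype ι]

theorem sq_sum_norm_sq_le_finrank_mul_sum_inner_sq (z : ι → E) :
    (∑ i, ‖z i‖ ^ 2) ^ 2 ≤ finrank ℝ E * ∑ i, ∑ j, ⟪z i, z j⟫ ^ 2 := by
  set b := stdOrthonormalBasis ℝ E
  set M : Fin (finrank ℝ E) → Fin (finrank ℝ E) → ℝ := fun k l => ∑ i, ⟪b k, z i⟫ * ⟪b l, z i⟫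
  have hinner (i j : ι) : ∑ k, ⟪b k, z i⟫ * ⟪b k, z j⟫ = ⟪z i, z j⟫ := by
    simpa only [real_inner_comm (b _) (z i)] using b.sum_inner_mul_inner (z i) (z j)
  have htrace : ∑ k, M k k = ∑ i, ‖z i‖ ^ 2 := by
    rw [Finset.sum_comm]
    simp only [hinner, real_inner_self_eq_norm_sq]
  have hfrob : ∑ k, ∑ l, M k l ^ 2 = ∑ i, ∑ j, ⟪z i, z j⟫ ^ 2 := by
    simp only [M, sq, Finset.sum_mul_sum, ← hinner, mul_mul_mul_comm]
    simp only [Finset.sum_comm (γ := Fin (finrank ℝ E)) (α := ι)]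
  calc (∑ i, ‖z i‖ ^ 2) ^ 2 = (∑ k, M k k) ^ 2 := by rw [htrace]
    _ ≤ finrank ℝ E * ∑ k, M k k ^ 2 := by
      simpa using sq_sum_le_card_mul_sum_sq (s := Finset.univ) (f := fun k => M k k)
    _ ≤ finrank ℝ E * ∑ k, ∑ l, M k l ^ 2 := by
      gcongr with k
      exact Finset.single_le_sum (f := fun l => M k l ^ 2) (fun _ _ => sq_nonneg _)
        (Finset.mem_univ k)
    _ = finrank ℝ E * ∑ i, ∑ j, ⟪z i, z j⟫ ^ 2 := by rw [hfrob]

theorem sum_arccos_abs_inner_le {z : ι → E} (hz : ∀ i, ‖z i‖ = 1) :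
    ∑ i, ∑ j, arccos |⟪z i, z j⟫| ≤
      (Fintype.card ι : ℝ) ^ 2 * (π / 2 - 69 / (50 * finrank ℝ E)) := by
  set N : ℝ := (Fintype.card ι : ℝ)
  set n : ℝ := (finrank ℝ E : ℝ)
  have hframe := sq_sum_norm_sq_le_finrank_mul_sum_inner_sq z
  simp only [hz, one_pow, Finset.sum_const, Finset.card_univ, nsmul_eq_mul, mul_one] at hframe
  have hpotential : N ^ 2 / n ≤ ∑ i, ∑ j, ⟪z i, z j⟫ ^ 2 :=
    div_le_of_le_mul₀ (by positivity) (by positivity) (by linarith)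
  calc ∑ i, ∑ j, arccos |⟪z i, z j⟫| ≤ ∑ i, ∑ j, (π / 2 - 69 / 50 * ⟪z i, z j⟫ ^ 2) := by
        gcongr with i _ j _
        refine arccos_abs_le ((abs_real_inner_le_norm _ _).trans ?_)
        rw [hz, hz, one_mul]
    _ = N ^ 2 * (π / 2) - 69 / 50 * ∑ i, ∑ j, ⟪z i, z j⟫ ^ 2 := by
        simp only [Finset.sum_sub_distrib, Finset.sum_const, Finset.card_univ, nsmul_eq_mul,
          ← Finset.mul_sum]
        ring
    _ ≤ N ^ 2 * (π / 2) - 69 / 50 * (N ^ 2 / n) := by gcongr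
    _ = N ^ 2 * (π / 2 - 69 / (50 * n)) := by ring

end FramePotential

theorem stmt_3_general (d N : ℕ) (hN : 0 < N)
    (z : Fin N → EuclideanSpace ℝ (Fin (d + 1))) (hz : ∀ i, ‖z i‖ = 1) :
    (1 / (N : ℝ) ^ 2) * ∑ i, ∑ j, Real.arccos |⟪z i, z j⟫| ≤
      Real.pi / 2 - 69 / (50 * (d + 1)) := by
  have := sum_arccos_abs_inner_le hz
  rw [Fintype.card_fin, finrank_euclideanSpace_fin] at this
  rw [one_div, inv_mul_le_iff₀ (by positivity)]
  exact_mod_cast this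

theorem stmt_3 (d N : ℕ) (hd : 2 ≤ d) (hN : 0 < N)
    (z : Fin N → EuclideanSpace ℝ (Fin (d + 1))) (hz : ∀ i, ‖z i‖ = 1) :
    (1 / (N : ℝ) ^ 2) * ∑ i, ∑ j, Real.arccos |⟪z i, z j⟫| ≤
      Real.pi / 2 - 69 / (50 * (d + 1)) :=
  stmt_3_general d N hN z hz
end

section
/- Suppose max over Borel probability measures μ on S^d of I(μ) = ∬ arccos|x·y| dμ(x)dμ(y) equals M_d, and M_{d-1} is the analogous maximum on S^{d-1}. Then M_{d-1} ≤ π − π²/(4·M_d). -/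
open RealInnerProductSpace MeasureTheory

/-- The energy integral `I(μ) = ∬ arccos |x·y| dμ(x) dμ(y)` for a measure on the
unit sphere of `ℝⁿ`. -/
noncomputable def energy (n : ℕ) (μ : Measure (Metric.sphere (0 : EuclideanSpace ℝ (Fin n)) 1)) : ℝ :=
  ∫ x, ∫ y, Real.arccos |⟪(x : EuclideanSpace ℝ (Fin n)), (y : EuclideanSpace ℝ (Fin n))⟫| ∂μ ∂μ
/-!
Embed `S^{d-1}` isometrically as an equator of `S^d` and let `p` be a pole orthogonal to it. For a
maximiser `ν` on `S^{d-1}` and `s ∈ [0, 1]`, the measure `s ν + (1 - s) δ_p` on `S^d` has energy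
`s² M_{d-1} + s (1 - s) π`, because every equatorial point is at angle `π / 2` from `p`. This is at
most `M_d`, and the optimal choice `s = π / (2 (π - M_{d-1}))` gives `π² / (4 (π - M_{d-1})) ≤ M_d`,
which rearranges to the claim.
-/

open Real Metric Function
open scoped unitInterval NNReal

namespace LinearIsometry

variable {𝕜 E F : Type*} [NormedField 𝕜] [SeminormedAddCommGroup E] [SeminormedAddCommGroup F]
  [NormedSpace 𝕜 E] [NormedSpace 𝕜 F]

def sphereMap (L : E →ₗᵢ[𝕜] F) (r : ℝ) : sphere (0 : E) r → sphere (0 : F) r :=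
  fun x => ⟨L x, by simp⟩

theorem continuous_sphereMap (L : E →ₗᵢ[𝕜] F) (r : ℝ) : Continuous (L.sphereMap r) :=
  (L.continuous.comp continuous_subtype_val).subtype_mk _

end LinearIsometry

theorem exists_linearIsometry_inner_eq_zero {F : Type*} [NormedAddCommGroup F]
    [InnerProductSpace ℝ F] {d : ℕ} (hF : Module.finrank ℝ F = d + 1) :
    ∃ (L : EuclideanSpace ℝ (Fin d) →ₗᵢ[ℝ] F) (p : sphere (0 : F) 1), ∀ x, ⟪L x, (p : F)⟫ = 0 := by
  have : Fact (Module.finrank ℝ F = d + 1) := ⟨hF⟩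
  have : FiniteDimensional ℝ F := Module.finite_of_finrank_eq_succ hF
  have : Nontrivial F := Module.nontrivial_of_finrank_eq_succ hF
  obtain ⟨p, hp⟩ := (NormedSpace.sphere_nonempty (x := (0 : F)) (r := 1)).2 zero_le_one
  let K := (ℝ ∙ p)ᗮ
  have hK : Module.finrank ℝ K = d :=
    Submodule.finrank_orthogonal_span_singleton (ne_zero_of_mem_unit_sphere ⟨p, hp⟩)
  let e := ((stdOrthonormalBasis ℝ K).reindex (finCongr hK)).repr.symm
  exact ⟨K.subtypeₗᵢ.comp e.toLinearIsometry, ⟨p, hp⟩, fun x =>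
    Submodule.mem_orthogonal_singleton_iff_inner_left.1 (e x).2⟩

section Mixture

variable {X : Type*} [MeasurableSpace X]

theorem integral_add_smul_dirac {α : Measure X} {h : X → ℝ} (hm : StronglyMeasurable h)
    (hα : Integrable h α) (a b : ℝ≥0) (p : X) :
    ∫ x, h x ∂(a • α + b • Measure.dirac p) = a * ∫ x, h x ∂α + b * h p := by
  rw [integral_add_measure hα.smul_measure_nnreal
    (integrable_dirac' hm (by simp)).smul_measure_nnreal, integral_smul_nnreal_measure,
    integral_smul_nnreal_measure, integral_dirac' _ _ hm]
  simp [NNReal.smul_def]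

theorem integral_integral_add_smul_dirac {k : X → X → ℝ} (hk : StronglyMeasurable (uncurry k))
    {C : ℝ} (hC : ∀ x y, ‖k x y‖ ≤ C) (α : Measure X) [IsFiniteMeasure α] (a b : ℝ≥0) (p : X) :
    ∫ x, ∫ y, k x y ∂(a • α + b • Measure.dirac p) ∂(a • α + b • Measure.dirac p) =
      a ^ 2 * ∫ x, ∫ y, k x y ∂α ∂α + a * b * (∫ x, k x p ∂α + ∫ y, k p y ∂α) + b ^ 2 * k p p := by
  set μ := a • α + b • Measure.dirac p
  have hk_left (x : X) : StronglyMeasurable (k x) := hk.comp_measurable measurable_prodMk_left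
  have hk_right : StronglyMeasurable (k · p) := hk.comp_measurable measurable_prodMk_right
  have hk_int {f : X → ℝ} (hf : StronglyMeasurable f) (hb : ∀ x, ‖f x‖ ≤ C) : Integrable f α :=
    .of_bound hf.aestronglyMeasurable C (ae_of_all _ hb)
  have hinner (x : X) : ∫ y, k x y ∂μ = a * ∫ y, k x y ∂α + b * k x p :=
    integral_add_smul_dirac (hk_left x) (hk_int (hk_left x) (hC x)) a b p
  have hα_int : Integrable (fun x => ∫ y, k x y ∂α) α :=
    .of_bound hk.integral_prod_right'.aestronglyMeasurable (C * α.real Set.univ)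
      (ae_of_all _ fun x => norm_integral_le_of_norm_le_const (ae_of_all _ (hC x)))
  have hμ_int : Integrable (fun x => ∫ y, k x y ∂μ) α := by
    simp_rw [hinner]
    exact (hα_int.const_mul _).add ((hk_int hk_right fun x => hC x p).const_mul _)
  calc ∫ x, ∫ y, k x y ∂μ ∂μ = a * ∫ x, ∫ y, k x y ∂μ ∂α + b * ∫ y, k p y ∂μ :=
        integral_add_smul_dirac hk.integral_prod_right' hμ_int a b p
    _ = _ := by
      simp_rw [hinner]
      rw [integral_add (hα_int.const_mul _) ((hk_int hk_right fun x => hC x p).const_mul _),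
        integral_const_mul, integral_const_mul]
      ring

theorem integral_integral_map {Y : Type*} [MeasurableSpace Y] {f : Y → X} (hf : Measurable f)
    {k : X → X → ℝ} (hk : StronglyMeasurable (uncurry k)) (ν : Measure Y) [IsFiniteMeasure ν] :
    ∫ x, ∫ y, k x y ∂(ν.map f) ∂(ν.map f) = ∫ x, ∫ y, k (f x) (f y) ∂ν ∂ν := by
  rw [integral_map (f := fun x => ∫ y, k x y ∂(ν.map f)) hf.aemeasurable
    hk.integral_prod_right'.aestronglyMeasurable]
  exact integral_congr_ae (ae_of_all _ fun x =>
    integral_map hf.aemeasurable (hk.comp_measurable measurable_prodMk_left).aestronglyMeasurable)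

end Mixture

section Sphere

local notation "𝕊" n:max => sphere (0 : EuclideanSpace ℝ (Fin n)) 1

theorem continuous_arccos_abs_inner (n : ℕ) :
    Continuous (uncurry fun x y : 𝕊 n => arccos |⟪(x : EuclideanSpace ℝ (Fin n)), y⟫|) := by
  fun_prop

theorem norm_arccos_abs_le (t : ℝ) : ‖arccos |t|‖ ≤ π / 2 := by
  rw [norm_of_nonneg (arccos_nonneg _)]
  exact arccos_le_pi_div_two.2 (abs_nonneg _)

theorem energy_le_pi_div_two {n : ℕ} (μ : Measure (𝕊 n)) [IsProbabilityMeasure μ] :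
    energy n μ ≤ π / 2 := by
  have hinner (x : 𝕊 n) : ‖∫ y, arccos |⟪(x : EuclideanSpace ℝ (Fin n)), y⟫| ∂μ‖ ≤ π / 2 := by
    simpa using norm_integral_le_of_norm_le_const (ae_of_all μ fun y => norm_arccos_abs_le _)
  calc energy n μ ≤ ‖energy n μ‖ := le_norm_self _
    _ ≤ π / 2 := (norm_integral_le_of_norm_le_const (ae_of_all μ hinner)).trans_eq (by simp)

theorem energy_add_smul_dirac {m n : ℕ}
    (L : EuclideanSpace ℝ (Fin m) →ₗᵢ[ℝ] EuclideanSpace ℝ (Fin n))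
    (p : 𝕊 n) (hp : ∀ x, ⟪L x, (p : EuclideanSpace ℝ (Fin n))⟫ = 0)
    (ν : Measure (𝕊 m)) [IsProbabilityMeasure ν] (a b : ℝ≥0) :
    energy n (a • ν.map (L.sphereMap 1) + b • Measure.dirac p) =
      a ^ 2 * energy m ν + a * b * π := by
  have hk := (continuous_arccos_abs_inner n).stronglyMeasurable
  have hf := (L.continuous_sphereMap 1).measurable
  have hmap {g : 𝕊 n → ℝ} (hg : Continuous g) : ∫ x, g x ∂(ν.map (L.sphereMap 1)) =
      ∫ x, g (L.sphereMap 1 x) ∂ν :=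
    integral_map hf.aemeasurable hg.aestronglyMeasurable
  rw [energy, integral_integral_add_smul_dirac hk (fun x y => norm_arccos_abs_le _),
    integral_integral_map hf hk, hmap (by fun_prop), hmap (by fun_prop)]
  simp [LinearIsometry.sphereMap, hp, real_inner_comm _ (p : EuclideanSpace ℝ (Fin n)), energy]

end Sphere

theorem le_pi_sub_pi_sq_div_of_forall_unitInterval {A M : ℝ} (hA : A ≤ π / 2)
    (h : ∀ s : I, (s : ℝ) ^ 2 * A + s * (1 - s) * π ≤ M) : A ≤ π - π ^ 2 / (4 * M) := by
  obtain ⟨c, hc, rfl⟩ : ∃ c, π / 2 ≤ c ∧ A = π - c := ⟨π - A, by linarith, by ring⟩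
  have hπ := pi_pos
  have hc0 : 0 < c := by linarith
  let s : I := ⟨π / (2 * c), by positivity, (div_le_one (by positivity)).2 (by linarith)⟩
  have hval : (s : ℝ) ^ 2 * (π - c) + s * (1 - s) * π = π ^ 2 / (4 * c) := by
    simp only [s]
    field_simp
    ring
  have hM : π ^ 2 / (4 * c) ≤ M := hval ▸ h s
  have hM0 : 0 < M := lt_of_lt_of_le (by positivity) hM
  rw [div_le_iff₀ (by positivity)] at hM
  rw [sub_le_sub_iff_left, div_le_iff₀ (by positivity)]
  linarith

theorem stmt_6_general (d : ℕ) (Md Md1 : ℝ)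
    (hMd : IsGreatest {r : ℝ | ∃ μ : Measure (Metric.sphere (0 : EuclideanSpace ℝ (Fin (d + 1))) 1),
      IsProbabilityMeasure μ ∧ r = energy (d + 1) μ} Md)
    (hMd1 : IsGreatest {r : ℝ | ∃ μ : Measure (Metric.sphere (0 : EuclideanSpace ℝ (Fin d)) 1),
      IsProbabilityMeasure μ ∧ r = energy d μ} Md1) :
    Md1 ≤ Real.pi - Real.pi ^ 2 / (4 * Md) := by
  obtain ⟨ν, hν, rfl⟩ := hMd1.1
  obtain ⟨L, p, hp⟩ := exists_linearIsometry_inner_eq_zero (finrank_euclideanSpace_fin (n := d + 1))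
  refine le_pi_sub_pi_sq_div_of_forall_unitInterval (energy_le_pi_div_two ν) fun s => hMd.2 ?_
  have := Measure.isProbabilityMeasure_map (L.continuous_sphereMap 1).aemeasurable (μ := ν)
  have h := energy_add_smul_dirac L p hp ν (unitInterval.toNNReal s)
    (unitInterval.toNNReal (σ s))
  simp only [unitInterval.coe_toNNReal, unitInterval.coe_symm_eq] at h
  exact ⟨_, inferInstance, h.symm⟩

theorem stmt_6 (d : ℕ) (hd : 1 ≤ d) (Md Md1 : ℝ)
    (hMd : IsGreatest {r : ℝ | ∃ μ : Measure (Metric.sphere (0 : EuclideanSpace ℝ (Fin (d + 1))) 1),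
      IsProbabilityMeasure μ ∧ r = energy (d + 1) μ} Md)
    (hMd1 : IsGreatest {r : ℝ | ∃ μ : Measure (Metric.sphere (0 : EuclideanSpace ℝ (Fin d)) 1),
      IsProbabilityMeasure μ ∧ r = energy d μ} Md1) :
    Md1 ≤ Real.pi - Real.pi ^ 2 / (4 * Md) :=
  stmt_6_general d Md Md1 hMd hMd1
end

section
/- The Chebyshev coefficient (1/π)∫_{-1}^{1} arccos|t| · T_n(t) · (1−t²)^{−1/2} dt equals π/4 when n = 0, equals −4/(πn²) when n ≡ 2 (mod 4), and equals 0 for all other n ≥ 1. -/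
/-!
Substituting `t = cos x` turns the Chebyshev coefficient into the Fourier cosine coefficient
`(1/π) ∫₀^π arccos |cos x| cos (n x) dx` of the triangle wave `arccos |cos x| = min x (π - x)`.
Integrating by parts on `[0, π/2]` and `[π/2, π]` gives `2 c (1 - c) / n²` with `c = cos (n π/2)`,
which is `-4 / n²` when `n ≡ 2 (mod 4)` and `0` otherwise.
-/

open Real Set MeasureTheory intervalIntegral Polynomial.Chebyshev

theorem integral_mul_cos_mul_arccos_mul_rpow (f : ℝ → ℝ) (c : ℝ) :
    ∫ t in (-1 : ℝ)..1, f t * cos (c * arccos t) * (1 - t ^ 2) ^ (-(1 / 2 : ℝ)) =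
      ∫ x in 0..π, f (cos x) * cos (c * x) := by
  simp_rw [rpow_neg_eq_inv_rpow, ← sqrt_eq_rpow]
  rw [← integral_measureT (fun t => f t * cos (c * arccos t)), integral_measureT_eq_integral_cos]
  refine integral_congr fun x hx => ?_
  rw [uIcc_of_le pi_pos.le] at hx
  simp only [arccos_cos hx.1 hx.2]

namespace Real

theorem cos_nat_mul_pi_div_two (n : ℕ) :
    cos (n * (π / 2)) = if n % 4 = 2 then -1 else if n % 4 = 0 then 1 else 0 := by
  have hn : (n : ℝ) * (π / 2) = (n % 4 : ℕ) * (π / 2) + (n / 4 : ℕ) * (2 * π) := by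
    conv_lhs => rw [← Nat.mod_add_div n 4]
    push_cast; ring
  rw [hn, cos_add_nat_mul_two_pi]
  have h4 : n % 4 < 4 := Nat.mod_lt n (by norm_num)
  interval_cases n % 4
  · norm_num
  · norm_num
  · rw [show ((2 : ℕ) : ℝ) * (π / 2) = π by push_cast; ring, cos_pi]
    norm_num
  · rw [show ((3 : ℕ) : ℝ) * (π / 2) = π / 2 + π by push_cast; ring, cos_add_pi, cos_pi_div_two]
    norm_num

theorem arccos_abs_cos_of_le_pi_div_two {x : ℝ} (h₀ : 0 ≤ x) (h : x ≤ π / 2) :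
    arccos |cos x| = x := by
  rw [abs_of_nonneg (cos_nonneg_of_mem_Icc ⟨by linarith [pi_pos], h⟩),
    arccos_cos h₀ (by linarith [pi_pos])]

theorem arccos_abs_cos_of_pi_div_two_le {x : ℝ} (h : π / 2 ≤ x) (hπ : x ≤ π) :
    arccos |cos x| = π - x := by
  rw [abs_of_nonpos (cos_nonpos_of_pi_div_two_le_of_le h (by linarith [pi_pos])), ← cos_pi_sub,
    arccos_cos (by linarith) (by linarith)]

end Real

theorem integral_sub_mul_cos_mul {c : ℝ} (hc : c ≠ 0) (a b d : ℝ) :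
    ∫ x in a..b, (x - d) * cos (c * x) =
      ((b - d) * sin (c * b) - (a - d) * sin (c * a)) / c + (cos (c * b) - cos (c * a)) / c ^ 2 := by
  have hF : ∀ x, HasDerivAt (fun x => (x - d) * sin (c * x) / c + cos (c * x) / c ^ 2)
      ((x - d) * cos (c * x)) x := by
    intro x
    have hsin := ((hasDerivAt_id x).const_mul c).sin
    have hcos := ((hasDerivAt_id x).const_mul c).cos
    refine ((((hasDerivAt_id x).sub_const d).mul hsin).div_const c).add
      (hcos.div_const (c ^ 2)) |>.congr_deriv ?_
    simp only [id]
    field_simp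
    ring
  rw [integral_eq_sub_of_hasDerivAt (fun x _ => hF x)
    ((by fun_prop : Continuous _).intervalIntegrable _ _)]
  ring

theorem integral_arccos_abs_cos_mul {g : ℝ → ℝ} (hg : IntervalIntegrable g volume 0 π) :
    ∫ x in 0..π, arccos |cos x| * g x =
      (∫ x in 0..π / 2, x * g x) + ∫ x in π / 2..π, (π - x) * g x := by
  have hπ := pi_pos
  have hint : IntervalIntegrable (fun x => arccos |cos x| * g x) volume 0 π :=
    hg.continuousOn_mul (by fun_prop)
  rw [← integral_add_adjacent_intervals (b := π / 2)
    (hint.mono_set (uIcc_subset_uIcc_left (by rw [uIcc_of_le hπ.le]; constructor <;> linarith)))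
    (hint.mono_set (uIcc_subset_uIcc_right (by rw [uIcc_of_le hπ.le]; constructor <;> linarith)))]
  congr 1 <;> refine integral_congr fun x hx => ?_ <;> rw [uIcc_of_le (by linarith)] at hx
  · rw [arccos_abs_cos_of_le_pi_div_two hx.1 hx.2]
  · rw [arccos_abs_cos_of_pi_div_two_le hx.1 hx.2]

theorem integral_arccos_abs_cos : ∫ x in 0..π, arccos |cos x| = π ^ 2 / 4 := by
  have := integral_arccos_abs_cos_mul (g := fun _ => 1) intervalIntegrable_const
  simp only [mul_one] at this
  rw [this, integral_sub intervalIntegrable_const intervalIntegral.intervalIntegrable_id,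
    integral_id, integral_id, intervalIntegral.integral_const, smul_eq_mul]
  ring

theorem integral_arccos_abs_cos_mul_cos_mul {c : ℝ} (hc : c ≠ 0) :
    ∫ x in 0..π, arccos |cos x| * cos (c * x) =
      2 * cos (c * (π / 2)) * (1 - cos (c * (π / 2))) / c ^ 2 := by
  rw [integral_arccos_abs_cos_mul ((by fun_prop : Continuous _).intervalIntegrable _ _)]
  have h₁ := integral_sub_mul_cos_mul hc 0 (π / 2) 0
  have h₂ := integral_sub_mul_cos_mul hc (π / 2) π π
  simp only [sub_zero, mul_zero, sin_zero, cos_zero] at h₁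
  rw [h₁, show (fun x => (π - x) * cos (c * x)) = fun x => -((x - π) * cos (c * x)) by
    ext; ring, intervalIntegral.integral_neg, h₂, show c * π = 2 * (c * (π / 2)) by ring,
    cos_two_mul]
  field_simp
  ring

theorem stmt_8 (n : ℕ) :
    (1 / Real.pi) * ∫ t in (-1 : ℝ)..1,
        Real.arccos |t| * Real.cos (n * Real.arccos t) * ((1 - t ^ 2) ^ (-(1 / 2 : ℝ))) =
      if n = 0 then Real.pi / 4
      else if n % 4 = 2 then -4 / (Real.pi * n ^ 2) else 0 := by
  rw [integral_mul_cos_mul_arccos_mul_rpow (fun t => arccos |t|)]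
  rcases eq_or_ne n 0 with rfl | hn
  · simp only [CharP.cast_eq_zero, zero_mul, cos_zero, mul_one, integral_arccos_abs_cos, if_true]
    field_simp
  · rw [integral_arccos_abs_cos_mul_cos_mul (Nat.cast_ne_zero.2 hn), cos_nat_mul_pi_div_two,
      if_neg hn]
    split_ifs <;> field_simp <;> ring
end

section
/- For any N points z_1,…,z_N on S¹, the discrete energy (1/N²)∑_{i,j=1}^N arccos|z_i·z_j| is at most π/4; moreover, if N is odd the energy is at most (π/4)·(N²−1)/N². -/
/-!
Write `z i = (cos θ i, sin θ i)`. Then `arccos |⟪z i, z j⟫|` is the distance from `θ i - θ j`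
to `πℤ`, i.e. the distance of the two angles on the circle `ℝ/πℤ` of length `π`.
Reduce the angles to `[0, π)`, sort them, and extend them to an increasing sequence `f` with
`f (k + N) = f k + π`. For a fixed shift `m ≤ N` the gaps `f (i + m) - f i`, `i < N`, lie in
`[0, π]` and add up to `m π`; as a gap `δ` contributes at most `min δ (π - δ)`, the pairs at
shift `m` contribute at most `π min m (N - m)`. Summing over `m` gives `π ⌊N² / 4⌋`.
-/

open RealInnerProductSpace

open Real Finset

noncomputable def lineAngle (x : ℝ) : ℝ := arccos |cos x|

lemma lineAngle_add_int_mul_pi (x : ℝ) (n : ℤ) : lineAngle (x + n * π) = lineAngle x := by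
  simp [lineAngle, cos_add_int_mul_pi, abs_mul]

lemma lineAngle_add_nat_mul_pi (x : ℝ) (n : ℕ) : lineAngle (x + n * π) = lineAngle x := by
  exact_mod_cast lineAngle_add_int_mul_pi x n

lemma lineAngle_pi_sub (x : ℝ) : lineAngle (π - x) = lineAngle x := by
  simp [lineAngle]

lemma lineAngle_le_of_nonneg {x : ℝ} (hx : 0 ≤ x) : lineAngle x ≤ x := by
  rcases le_or_gt x π with h | h
  · calc lineAngle x ≤ arccos (cos x) := arccos_le_arccos (le_abs_self _)
      _ = x := arccos_cos hx h
  · exact (arccos_le_pi_div_two.mpr (abs_nonneg _)).trans (by linarith [pi_pos])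

lemma lineAngle_le_pi_sub {x : ℝ} (hx : x ≤ π) : lineAngle x ≤ π - x := by
  simpa [lineAngle_pi_sub] using lineAngle_le_of_nonneg (sub_nonneg.mpr hx)

lemma sum_range_shift_sub_eq_nsmul {M : Type*} [AddCommGroup M] {N : ℕ} {f : ℕ → M} {c : M}
    (hf : ∀ k, f (k + N) = f k + c) (m : ℕ) :
    ∑ i ∈ range N, (f (i + m) - f i) = m • c := by
  induction m with
  | zero => simp
  | succ m ih =>
    have hstep : ∑ i ∈ range N, (f (i + 1 + m) - f (i + m)) = c := by
      rw [sum_range_sub (fun i => f (i + m)), zero_add, add_comm N, hf, add_sub_cancel_left]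
    calc ∑ i ∈ range N, (f (i + (m + 1)) - f i)
        = ∑ i ∈ range N, ((f (i + 1 + m) - f (i + m)) + (f (i + m) - f i)) := by
          refine sum_congr rfl fun i _ => ?_
          rw [sub_add_sub_cancel, add_right_comm, add_assoc]
      _ = (m + 1) • c := by rw [sum_add_distrib, hstep, ih, succ_nsmul']

lemma sum_lineAngle_shift_le {N m : ℕ} {f : ℕ → ℝ} (hf : Monotone f)
    (hper : ∀ k, f (k + N) = f k + π) (hm : m ≤ N) :
    ∑ i ∈ range N, lineAngle (f (i + m) - f i) ≤ π * (min m (N - m) : ℕ) := by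
  have hsum := sum_range_shift_sub_eq_nsmul hper m
  rw [nsmul_eq_mul] at hsum
  have hgap_nonneg : ∀ i, 0 ≤ f (i + m) - f i := fun i => sub_nonneg.2 (hf (by omega))
  have hgap_le : ∀ i, f (i + m) - f i ≤ π := fun i => by
    have := hf (show i + m ≤ i + N by omega)
    rw [hper] at this
    linarith
  rcases le_total m (N - m) with h | h
  · calc ∑ i ∈ range N, lineAngle (f (i + m) - f i)
        ≤ ∑ i ∈ range N, (f (i + m) - f i) :=
          sum_le_sum fun i _ => lineAngle_le_of_nonneg (hgap_nonneg i)
      _ = π * (min m (N - m) : ℕ) := by rw [hsum, min_eq_left h, mul_comm]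
  · calc ∑ i ∈ range N, lineAngle (f (i + m) - f i)
        ≤ ∑ i ∈ range N, (π - (f (i + m) - f i)) :=
          sum_le_sum fun i _ => lineAngle_le_pi_sub (hgap_le i)
      _ = π * (min m (N - m) : ℕ) := by
          rw [sum_sub_distrib, hsum, min_eq_right h, Nat.cast_sub hm]
          simp only [sum_const, card_range, nsmul_eq_mul]
          ring

theorem four_mul_sum_range_min_add_mod_two :
    ∀ N : ℕ, 4 * ∑ m ∈ range N, min m (N - m) + N % 2 = N ^ 2
  | 0 => rfl
  | 1 => rfl
  | N + 2 => by
    have hshift : ∑ m ∈ range (N + 2), min m (N + 2 - m)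
        = ∑ m ∈ range N, min m (N - m) + (N + 1) := by
      rw [sum_range_succ', sum_range_succ]
      have hterm : ∀ m ∈ range N, min (m + 1) (N + 2 - (m + 1)) = min m (N - m) + 1 := by
        intro m hm
        have := mem_range.1 hm
        omega
      rw [sum_congr rfl hterm, sum_add_distrib]
      simp only [sum_const, card_range, smul_eq_mul, mul_one]
      omega
    have ih := four_mul_sum_range_min_add_mod_two N
    rw [hshift, Nat.add_mod_right]
    linarith

section PeriodicExtension

open Fin.NatCast

variable {N : ℕ} [NeZero N]

/-- For monotone `γ` with all values in a window of length `π`, this enumerates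
the values `γ i + n * π`, `n : ℕ`, in increasing order. -/
noncomputable def extendByPi (γ : Fin N → ℝ) (k : ℕ) : ℝ := γ (k : Fin N) + (k / N : ℕ) * π

lemma extendByPi_add (γ : Fin N → ℝ) (k : ℕ) : extendByPi γ (k + N) = extendByPi γ k + π := by
  simp only [extendByPi, Nat.cast_add, Fin.natCast_self, add_zero,
    Nat.add_div_right k (NeZero.pos N)]
  push_cast
  ring

lemma monotone_extendByPi {γ : Fin N → ℝ} (hγ : Monotone γ) (hspan : ∀ i j, γ i ≤ γ j + π) :
    Monotone (extendByPi γ) := by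
  intro k l hkl
  rcases (Nat.div_le_div_right (c := N) hkl).lt_or_eq with hq | hq
  · have hq' : ((k / N : ℕ) : ℝ) + 1 ≤ (l / N : ℕ) := by exact_mod_cast hq
    have hwrap := mul_le_mul_of_nonneg_right hq' pi_pos.le
    have := hspan (k : Fin N) l
    simp only [extendByPi]
    linarith
  · have hmod : k % N ≤ l % N := by
      have := Nat.mod_add_div k N
      have := Nat.mod_add_div l N
      rw [hq] at *
      omega
    simp only [extendByPi, hq]
    gcongr
    exact hγ (Fin.le_iff_val_le_val.2 (by simpa using hmod))

lemma sum_sum_lineAngle_eq_sum_shift (γ : Fin N → ℝ) :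
    ∑ i, ∑ j, lineAngle (γ j - γ i)
      = ∑ m ∈ range N, ∑ i ∈ range N, lineAngle (extendByPi γ (i + m) - extendByPi γ i) := by
  have hterm : ∀ i m : Fin N, lineAngle (γ (i + m) - γ i)
      = lineAngle (extendByPi γ (i + m : ℕ) - extendByPi γ i) := by
    intro i m
    have hcast : ((i + m : ℕ) : Fin N) = i + m := by simp
    simp only [extendByPi, hcast, Fin.cast_val_eq_self, Nat.div_eq_of_lt i.isLt]
    rw [← lineAngle_add_nat_mul_pi _ ((i + m : ℕ) / N)]
    congr 1
    push_cast
    ring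
  calc ∑ i, ∑ j, lineAngle (γ j - γ i)
      = ∑ i : Fin N, ∑ m : Fin N, lineAngle (γ (i + m) - γ i) :=
        sum_congr rfl fun i _ => (Equiv.sum_comp (Equiv.addLeft i) _).symm
    _ = ∑ i : Fin N, ∑ m : Fin N, lineAngle (extendByPi γ (i + m : ℕ) - extendByPi γ i) := by
        simp only [hterm]
    _ = _ := by
        rw [sum_comm, ← Fin.sum_univ_eq_sum_range]
        exact sum_congr rfl fun m _ =>
          Fin.sum_univ_eq_sum_range (fun i => lineAngle (extendByPi γ (i + m) - extendByPi γ i)) N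

lemma sum_sum_lineAngle_le_of_monotone {γ : Fin N → ℝ} (hγ : Monotone γ)
    (hspan : ∀ i j, γ i ≤ γ j + π) :
    ∑ i, ∑ j, lineAngle (γ i - γ j) ≤ π * ∑ m ∈ range N, min m (N - m) := by
  rw [sum_comm, sum_sum_lineAngle_eq_sum_shift, Nat.cast_sum, mul_sum]
  exact sum_le_sum fun m hm => sum_lineAngle_shift_le (monotone_extendByPi hγ hspan)
    (extendByPi_add γ) (mem_range.1 hm).le

end PeriodicExtension

lemma sum_sum_lineAngle_le {N : ℕ} [NeZero N] (θ : Fin N → ℝ) :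
    ∑ i, ∑ j, lineAngle (θ i - θ j) ≤ π * ∑ m ∈ range N, min m (N - m) := by
  set α := fun i => toIcoMod pi_pos 0 (θ i)
  have hreduce : ∀ i j, lineAngle (θ i - θ j) = lineAngle (α i - α j) := by
    intro i j
    have hi := self_sub_toIcoMod_eq_mul pi_pos 0 (θ i)
    have hj := self_sub_toIcoMod_eq_mul pi_pos 0 (θ j)
    rw [← lineAngle_add_int_mul_pi (α i - α j)
      (toIcoDiv pi_pos 0 (θ i) - toIcoDiv pi_pos 0 (θ j))]
    congr 1
    push_cast
    linarith
  set σ := Tuple.sort α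
  have hsort : ∑ i, ∑ j, lineAngle (α i - α j) = ∑ i, ∑ j, lineAngle (α (σ i) - α (σ j)) := by
    rw [← Equiv.sum_comp σ]
    exact sum_congr rfl fun i _ => (Equiv.sum_comp σ _).symm
  simp only [hreduce, hsort]
  refine sum_sum_lineAngle_le_of_monotone (Tuple.monotone_sort α) fun i j => ?_
  have hi := toIcoMod_mem_Ico' pi_pos (θ (σ i))
  have hj := toIcoMod_mem_Ico' pi_pos (θ (σ j))
  simp only [Set.mem_Ico] at hi hj
  simp only [α]
  linarith

lemma EuclideanSpace.exists_eq_cos_sin {z : EuclideanSpace ℝ (Fin 2)} (hz : ‖z‖ = 1) :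
    ∃ θ, z 0 = cos θ ∧ z 1 = sin θ := by
  set w : ℂ := ⟨z 0, z 1⟩
  have hw : ‖w‖ = 1 := by
    rw [Complex.norm_eq_sqrt_sq_add_sq, ← hz, EuclideanSpace.norm_eq, Fin.sum_univ_two]
    simp [w]
  refine ⟨Complex.arg w, ?_, ?_⟩
  · rw [Complex.cos_arg (norm_ne_zero_iff.1 (hw.symm ▸ one_ne_zero)), hw, div_one]
  · rw [Complex.sin_arg, hw, div_one]

lemma EuclideanSpace.inner_eq_cos_sub {z w : EuclideanSpace ℝ (Fin 2)} {a b : ℝ}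
    (hz : z 0 = cos a ∧ z 1 = sin a) (hw : w 0 = cos b ∧ w 1 = sin b) :
    ⟪z, w⟫ = cos (a - b) := by
  simp [PiLp.inner_apply, Fin.sum_univ_two, hz, hw, cos_sub]
  ring

theorem stmt_14 (N : ℕ) (hN : 0 < N) (z : Fin N → EuclideanSpace ℝ (Fin 2))
    (hz : ∀ i, ‖z i‖ = 1) :
    (1 / (N : ℝ) ^ 2) * ∑ i, ∑ j, Real.arccos |⟪z i, z j⟫| ≤ Real.pi / 4 ∧
    (Odd N → (1 / (N : ℝ) ^ 2) * ∑ i, ∑ j, Real.arccos |⟪z i, z j⟫| ≤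
      Real.pi / 4 * (((N : ℝ) ^ 2 - 1) / (N : ℝ) ^ 2)) := by
  have : NeZero N := ⟨hN.ne'⟩
  choose θ hθ using fun i => EuclideanSpace.exists_eq_cos_sin (hz i)
  have henergy : ∑ i, ∑ j, arccos |⟪z i, z j⟫| ≤ π * ∑ m ∈ range N, min m (N - m) := by
    simpa only [lineAngle, EuclideanSpace.inner_eq_cos_sub (hθ _) (hθ _)] using
      sum_sum_lineAngle_le θ
  have hcount : 4 * ((∑ m ∈ range N, min m (N - m) : ℕ) : ℝ) + (N % 2 : ℕ) = (N : ℝ) ^ 2 := by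
    exact_mod_cast four_mul_sum_range_min_add_mod_two N
  have hN2 : (0 : ℝ) < (N : ℝ) ^ 2 := by positivity
  constructor
  · rw [one_div_mul_eq_div, div_le_iff₀ hN2]
    have : (0 : ℝ) ≤ (N % 2 : ℕ) := Nat.cast_nonneg _
    nlinarith [pi_pos]
  · intro hodd
    rw [Nat.odd_iff.1 hodd, Nat.cast_one] at hcount
    calc (1 / (N : ℝ) ^ 2) * ∑ i, ∑ j, arccos |⟪z i, z j⟫|
        ≤ (1 / (N : ℝ) ^ 2) * (π * ((N : ℝ) ^ 2 - 1) / 4) := by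
          gcongr
          rw [← hcount]
          linarith
      _ = π / 4 * (((N : ℝ) ^ 2 - 1) / (N : ℝ) ^ 2) := by ring
end

section
/- For b > 1, the inequality arccos|t| ≤ π/2 − b·t² holds for all t ∈ [−1,1] if and only if π/2 − (b+√(b²−1))/2 − arccos(√((b+√(b²−1))/(2b))) ≥ 0. -/
open Real

private lemma le_one_of_sq {A : ℝ} (h0 : 0 ≤ A) (h : A ^ 2 ≤ 1) : A ≤ 1 := by nlinarith

private lemma one_le_of_sq {A : ℝ} (h0 : 0 ≤ A) (h : 1 ≤ A ^ 2) : 1 ≤ A := by nlinarith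

private lemma hasDeriv_f (b x : ℝ) (hx1 : -1 < x) (hx2 : x < 1) :
    HasDerivAt (fun y => Real.arcsin y - b * y ^ 2)
      (1 / Real.sqrt (1 - x ^ 2) - b * (2 * x)) x := by
  have h1 : HasDerivAt Real.arcsin (1 / Real.sqrt (1 - x ^ 2)) x :=
    Real.hasDerivAt_arcsin (by linarith) (by linarith)
  have h2 : HasDerivAt (fun y : ℝ => b * y ^ 2) (b * (2 * x)) x := by
    simpa using (hasDerivAt_pow 2 x).const_mul b
  exact h1.sub h2

private lemma cont_f (b : ℝ) (s : Set ℝ) :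
    ContinuousOn (fun y => Real.arcsin y - b * y ^ 2) s :=
  (Real.continuous_arcsin.sub (continuous_const.mul (continuous_pow 2))).continuousOn

private lemma sqA (b x : ℝ) (hx1 : -1 < x) (hx2 : x < 1) :
    (2 * b * x * Real.sqrt (1 - x ^ 2)) ^ 2 = 4 * b ^ 2 * x ^ 2 * (1 - x ^ 2) := by
  have hws : Real.sqrt (1 - x ^ 2) ^ 2 = 1 - x ^ 2 := Real.sq_sqrt (by nlinarith)
  rw [mul_pow, hws]; ring

private lemma mono_low (b c : ℝ) (hb0 : 0 < b) (hc1 : 1 / 2 < c) (hc2 : c < 1)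
    (hk : 4 * b ^ 2 * c * (1 - c) = 1) :
    MonotoneOn (fun y => Real.arcsin y - b * y ^ 2) (Set.Icc 0 (Real.sqrt (1 - c))) := by
  have hcs : Real.sqrt (1 - c) ^ 2 = 1 - c := Real.sq_sqrt (by linarith)
  have hslt1 : Real.sqrt (1 - c) ≤ 1 := by
    nlinarith [Real.sqrt_nonneg (1 - c)]
  apply monotoneOn_of_deriv_nonneg (convex_Icc _ _) (cont_f b _)
  · rw [interior_Icc]
    intro x hx
    exact (hasDeriv_f b x (by linarith [hx.1]) (by linarith [hx.2])).differentiableAt.differentiableWithinAt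
  · rw [interior_Icc]
    intro x hx
    have hx1 : -1 < x := by linarith [hx.1]
    have hx2 : x < 1 := by linarith [hx.2]
    rw [(hasDeriv_f b x hx1 hx2).deriv]
    have hwp : 0 < Real.sqrt (1 - x ^ 2) := Real.sqrt_pos.2 (by nlinarith)
    have hxsq : x ^ 2 ≤ 1 - c := by nlinarith [hx.1, hx.2, Real.sqrt_nonneg (1 - c)]
    have h4 : 4 * b ^ 2 * x ^ 2 * (1 - x ^ 2) ≤ 1 := by
      nlinarith [mul_nonneg (mul_nonneg (sq_nonneg b) (by linarith : (0:ℝ) ≤ (1 - c) - x ^ 2))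
        (by nlinarith : (0:ℝ) ≤ c - x ^ 2)]
    have hA : 2 * b * x * Real.sqrt (1 - x ^ 2) ≤ 1 := by
      apply le_one_of_sq
      · exact mul_nonneg (mul_nonneg (by linarith) hx.1.le) hwp.le
      · rw [sqA b x hx1 hx2]; exact h4
    have : b * (2 * x) ≤ 1 / Real.sqrt (1 - x ^ 2) := by
      rw [le_div_iff₀ hwp]; nlinarith
    linarith

private lemma mono_mid (b c : ℝ) (hb0 : 0 < b) (hc1 : 1 / 2 < c) (hc2 : c < 1)
    (hk : 4 * b ^ 2 * c * (1 - c) = 1) :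
    AntitoneOn (fun y => Real.arcsin y - b * y ^ 2)
      (Set.Icc (Real.sqrt (1 - c)) (Real.sqrt c)) := by
  have hcs : Real.sqrt (1 - c) ^ 2 = 1 - c := Real.sq_sqrt (by linarith)
  have hcs' : Real.sqrt c ^ 2 = c := Real.sq_sqrt (by linarith)
  have hspos : 0 < Real.sqrt (1 - c) := Real.sqrt_pos.2 (by linarith)
  have hslt1 : Real.sqrt c ≤ 1 := by nlinarith [Real.sqrt_nonneg c]
  apply antitoneOn_of_deriv_nonpos (convex_Icc _ _) (cont_f b _)
  · rw [interior_Icc]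
    intro x hx
    exact (hasDeriv_f b x (by linarith [hx.1]) (by linarith [hx.2])).differentiableAt.differentiableWithinAt
  · rw [interior_Icc]
    intro x hx
    have hxpos : 0 < x := lt_trans hspos hx.1
    have hx1 : -1 < x := by linarith
    have hx2 : x < 1 := by
      rcases lt_or_ge x 1 with h | h
      · exact h
      · exfalso; nlinarith [hx.2, Real.sqrt_nonneg c]
    rw [(hasDeriv_f b x hx1 hx2).deriv]
    have hwp : 0 < Real.sqrt (1 - x ^ 2) := Real.sqrt_pos.2 (by nlinarith)
    have hxl : 1 - c ≤ x ^ 2 := by nlinarith [hx.1]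
    have hxr : x ^ 2 ≤ c := by nlinarith [hx.2, Real.sqrt_nonneg c]
    have h4 : 1 ≤ 4 * b ^ 2 * x ^ 2 * (1 - x ^ 2) := by
      nlinarith [mul_nonneg (mul_nonneg (sq_nonneg b) (by linarith : (0:ℝ) ≤ x ^ 2 - (1 - c)))
        (by linarith : (0:ℝ) ≤ c - x ^ 2)]
    have hA : 1 ≤ 2 * b * x * Real.sqrt (1 - x ^ 2) := by
      apply one_le_of_sq
      · exact mul_nonneg (mul_nonneg (by linarith) hxpos.le) hwp.le
      · rw [sqA b x hx1 hx2]; exact h4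
    have : 1 / Real.sqrt (1 - x ^ 2) ≤ b * (2 * x) := by
      rw [div_le_iff₀ hwp]; nlinarith
    linarith

private lemma mono_hi (b c : ℝ) (hb0 : 0 < b) (hc1 : 1 / 2 < c) (hc2 : c < 1)
    (hk : 4 * b ^ 2 * c * (1 - c) = 1) :
    MonotoneOn (fun y => Real.arcsin y - b * y ^ 2) (Set.Icc (Real.sqrt c) 1) := by
  have hcs' : Real.sqrt c ^ 2 = c := Real.sq_sqrt (by linarith)
  have hspos : 0 < Real.sqrt c := Real.sqrt_pos.2 (by linarith)
  apply monotoneOn_of_deriv_nonneg (convex_Icc _ _) (cont_f b _)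
  · rw [interior_Icc]
    intro x hx
    exact (hasDeriv_f b x (by linarith [hx.1]) hx.2).differentiableAt.differentiableWithinAt
  · rw [interior_Icc]
    intro x hx
    have hxpos : 0 < x := lt_trans hspos hx.1
    have hx1 : -1 < x := by linarith
    have hx2 : x < 1 := hx.2
    rw [(hasDeriv_f b x hx1 hx2).deriv]
    have hwp : 0 < Real.sqrt (1 - x ^ 2) := Real.sqrt_pos.2 (by nlinarith)
    have hxl : c ≤ x ^ 2 := by nlinarith [hx.1]
    have h4 : 4 * b ^ 2 * x ^ 2 * (1 - x ^ 2) ≤ 1 := by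
      nlinarith [mul_nonneg (mul_nonneg (sq_nonneg b) (by nlinarith : (0:ℝ) ≤ x ^ 2 - (1 - c)))
        (by linarith : (0:ℝ) ≤ x ^ 2 - c)]
    have hA : 2 * b * x * Real.sqrt (1 - x ^ 2) ≤ 1 := by
      apply le_one_of_sq
      · exact mul_nonneg (mul_nonneg (by linarith) hxpos.le) hwp.le
      · rw [sqA b x hx1 hx2]; exact h4
    have : b * (2 * x) ≤ 1 / Real.sqrt (1 - x ^ 2) := by
      rw [le_div_iff₀ hwp]; nlinarith
    linarith

private lemma aux_19 (b : ℝ) (hb : 1 < b)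
    (hkey : b * (Real.sqrt ((b + Real.sqrt (b ^ 2 - 1)) / (2 * b))) ^ 2 ≤
      Real.arcsin (Real.sqrt ((b + Real.sqrt (b ^ 2 - 1)) / (2 * b))))
    (a : ℝ) (ha0 : 0 ≤ a) (ha1 : a ≤ 1) : b * a ^ 2 ≤ Real.arcsin a := by
  have hb0 : (0:ℝ) < b := by linarith
  set r := Real.sqrt (b ^ 2 - 1) with hrdef
  have hb2 : (0:ℝ) ≤ b ^ 2 - 1 := by nlinarith
  have hr0 : 0 ≤ r := Real.sqrt_nonneg _
  have hr2 : r ^ 2 = b ^ 2 - 1 := Real.sq_sqrt hb2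
  have hrpos : 0 < r := Real.sqrt_pos.2 (by nlinarith)
  have hrb : r < b := by nlinarith
  set c : ℝ := (b + r) / (2 * b) with hcdef
  have hc1 : 1 / 2 < c := by
    rw [hcdef, div_lt_div_iff₀ (by norm_num) (by positivity)]; nlinarith
  have hc2 : c < 1 := by rw [hcdef, div_lt_one (by positivity)]; nlinarith
  have hk : 4 * b ^ 2 * c * (1 - c) = 1 := by
    rw [hcdef]; field_simp; nlinarith
  set t0 := Real.sqrt c with ht0def
  have ht0sq : t0 ^ 2 = c := Real.sq_sqrt (by linarith)
  have ht0nn : 0 ≤ t0 := Real.sqrt_nonneg _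
  have ht0lt1 : t0 < 1 := by nlinarith
  set t1 := Real.sqrt (1 - c) with ht1def
  have ht1sq : t1 ^ 2 = 1 - c := Real.sq_sqrt (by linarith)
  have ht1nn : 0 ≤ t1 := Real.sqrt_nonneg _
  have ht1lt0 : t1 < t0 := by nlinarith
  have hkey' : b * t0 ^ 2 ≤ Real.arcsin t0 := hkey
  have m1 := mono_low b c hb0 hc1 hc2 hk
  have m2 := mono_mid b c hb0 hc1 hc2 hk
  have m3 := mono_hi b c hb0 hc1 hc2 hk
  have hgoal : 0 ≤ Real.arcsin a - b * a ^ 2 := by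
    rcases le_or_gt a t1 with h1 | h1
    · have := m1 (Set.mem_Icc.2 ⟨le_refl 0, ht1nn⟩) (Set.mem_Icc.2 ⟨ha0, h1⟩) ha0
      simpa using this
    · rcases le_or_gt a t0 with h2 | h2
      · have := m2 (Set.mem_Icc.2 ⟨h1.le, h2⟩) (Set.mem_Icc.2 ⟨ht1lt0.le, le_refl t0⟩) h2
        simp only at this
        linarith
      · have := m3 (Set.mem_Icc.2 ⟨le_refl t0, ht0lt1.le⟩) (Set.mem_Icc.2 ⟨h2.le, ha1⟩) h2.le
        simp only at this
        linarith
  linarith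

theorem stmt_19 (b : ℝ) (hb : 1 < b) :
    (∀ t ∈ Set.Icc (-1 : ℝ) 1, Real.arccos |t| ≤ Real.pi / 2 - b * t ^ 2) ↔
      0 ≤ Real.pi / 2 - (b + Real.sqrt (b ^ 2 - 1)) / 2 -
        Real.arccos (Real.sqrt ((b + Real.sqrt (b ^ 2 - 1)) / (2 * b))) := by
  have hb0 : (0:ℝ) < b := by linarith
  set r := Real.sqrt (b ^ 2 - 1) with hrdef
  have hb2 : (0:ℝ) ≤ b ^ 2 - 1 := by nlinarith
  have hr0 : 0 ≤ r := Real.sqrt_nonneg _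
  have hr2 : r ^ 2 = b ^ 2 - 1 := Real.sq_sqrt hb2
  have hrb : r < b := by nlinarith
  set t0 := Real.sqrt ((b + r) / (2 * b)) with ht0def
  have ht0sq : t0 ^ 2 = (b + r) / (2 * b) := Real.sq_sqrt (by positivity)
  have ht0nn : 0 ≤ t0 := Real.sqrt_nonneg _
  have ht0le1 : t0 ≤ 1 := by
    have : t0 ^ 2 ≤ 1 := by rw [ht0sq, div_le_one (by positivity)]; nlinarith
    nlinarith
  have hbt0 : b * t0 ^ 2 = (b + r) / 2 := by rw [ht0sq]; field_simp
  constructor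
  · intro h
    have := h t0 (Set.mem_Icc.2 ⟨by linarith, ht0le1⟩)
    rw [abs_of_nonneg ht0nn, hbt0] at this
    linarith
  · intro h t ht
    have harc : Real.arccos t0 = Real.pi / 2 - Real.arcsin t0 :=
      Real.arccos_eq_pi_div_two_sub_arcsin t0
    have hkey : b * t0 ^ 2 ≤ Real.arcsin t0 := by rw [hbt0]; linarith
    have habs1 : |t| ≤ 1 := abs_le.2 ⟨ht.1, ht.2⟩
    have := aux_19 b hb hkey |t| (abs_nonneg t) habs1
    rw [sq_abs] at this
    rw [Real.arccos_eq_pi_div_two_sub_arcsin]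
    linarith
end
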